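/- Let c ∈ (0,1) and n = 2^{cm} with 1 ≤ n ≤ 2^{m-1} - 1. Then g(n,m) ≤ (n/c)·(6 - 3.2·log_2(c)). -/

import Mathlib

open Finset

/-- `f` assigns each component (indexed by `ι`) to one of `n` classes so that the
components in each class are pairwise disjoint with union `[m]`: every `x ∈ [m]`
lies in exactly one component of each class. -/
def IsResolution {ι : Type*} {m n : ℕ} (C : ι → Finset (Fin m)) (f : ι → Fin n) : Prop :=
  ∀ (i : Fin n) (x : Fin m), ∃! j : ι, f j = i ∧ x ∈ C j

/-- The multiset of nonempty subsets of `[m]` given by `C` is uniquely resolvable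
into `n` classes: a resolution exists and is unique up to renaming the classes. -/
def UniquelyResolvable {ι : Type*} {m : ℕ} (n : ℕ) (C : ι → Finset (Fin m)) : Prop :=
  (∀ j, (C j).Nonempty) ∧ ∃ f : ι → Fin n, IsResolution C f ∧
    ∀ f' : ι → Fin n, IsResolution C f' → ∃ σ : Equiv.Perm (Fin n), f' = σ ∘ f

/-- `g n m` : maximum size of a multiset of nonempty subsets of `[m]` that is
uniquely resolvable into `n` classes. -/
noncomputable def g (n m : ℕ) : ℕ :=
  sSup {k | ∃ C : Fin k → Finset (Fin m), UniquelyResolvable n C}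

/-- `P k m` : the largest `N` such that there is a multiset of nonempty subsets of `[m]`
uniquely resolvable into `N` classes in which every class has size exactly `k`. -/
noncomputable def P (k m : ℕ) : ℕ :=
  sSup {N | ∃ C : Fin N × Fin k → Finset (Fin m),
    UniquelyResolvable N C ∧ IsResolution C Prod.fst}

/-- The binary entropy function. -/
noncomputable def H2 (x : ℝ) : ℝ := -x * Real.logb 2 x - (1 - x) * Real.logb 2 (1 - x)

/-! Let `K = ⌊(6 - 3.2 log₂ c) / c⌋ ≥ 6`. Each class of a resolution partitions `[m]`, so it has
fewer than `K` components of size `> m / K`. Two components with the same set can be exchanged,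
and uniqueness of the resolution rules this out unless the set is `[m]`; hence the components of
size `≤ m / K` are distinct sets, and weighting each such set `A` by `K ^ (m / K - |A|) ≥ 1` bounds
their number by `K ^ (m / K) (1 + 1 / K) ^ m ≤ (e K) ^ (m / K) ≤ 2 ^ (c m) = n`. Altogether
`g(n, m) ≤ (K - 1) n + n = K n`. -/

namespace IsResolution

variable {ι : Type*} {m n : ℕ} {C : ι → Finset (Fin m)} {f : ι → Fin n}

theorem eq_of_mem (hf : IsResolution C f) {j j' : ι} (hfj : f j = f j') {x : Fin m}
    (hx : x ∈ C j) (hx' : x ∈ C j') : j = j' :=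
  (hf (f j) x).unique ⟨rfl, hx⟩ ⟨hfj.symm, hx'⟩

theorem comp_perm (hf : IsResolution C f) (π : Equiv.Perm ι) (hπ : ∀ j, C (π j) = C j) :
    IsResolution C (f ∘ π) := fun i x =>
  (π.symm.existsUnique_congr fun j => by rw [← hπ (π.symm j)]; simp).mp (hf i x)

theorem sum_card_le (hf : IsResolution C f) (i : Fin n) {T : Finset ι} (hT : ∀ j ∈ T, f j = i) :
    ∑ j ∈ T, #(C j) ≤ m := by
  classical
  have hdisj : (T : Set ι).PairwiseDisjoint C := fun j hj j' hj' hne =>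
    Finset.disjoint_left.mpr fun x hx hx' =>
      hne (hf.eq_of_mem ((hT j hj).trans (hT j' hj').symm) hx hx')
  rw [← card_biUnion hdisj]
  simpa using card_le_univ (T.biUnion C)

theorem card_filter_lt_mul_card_le [Fintype ι] (hf : IsResolution C f) (K : ℕ) (i : Fin n) :
    #{j | f j = i ∧ m < K * #(C j)} ≤ K - 1 := by
  set T : Finset ι := {j | f j = i ∧ m < K * #(C j)}
  have hsum := hf.sum_card_le i (T := T) fun j hj => (mem_filter.mp hj).2.1
  have : #T * (m + 1) ≤ K * m := calc
    #T * (m + 1) = ∑ _j ∈ T, (m + 1) := by rw [sum_const, smul_eq_mul]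
    _ ≤ ∑ j ∈ T, K * #(C j) := sum_le_sum fun j hj => (mem_filter.mp hj).2.2
    _ = K * ∑ j ∈ T, #(C j) := (mul_sum ..).symm
    _ ≤ K * m := Nat.mul_le_mul_left K hsum
  by_contra! h
  nlinarith [Nat.mul_le_mul_right (m + 1) (by omega : K ≤ #T)]

theorem card_filter_lt_mul_card_le_mul [Fintype ι] (hf : IsResolution C f) (K : ℕ) :
    #{j | m < K * #(C j)} ≤ (K - 1) * n := by
  classical
  rw [card_eq_sum_card_fiberwise (f := f) (t := univ) fun j _ => mem_univ _]
  calc ∑ i, #{j ∈ ({j | m < K * #(C j)} : Finset ι) | f j = i}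
      ≤ ∑ _i : Fin n, (K - 1) := sum_le_sum fun i _ => by
        simpa only [filter_filter, and_comm] using hf.card_filter_lt_mul_card_le K i
    _ = (K - 1) * n := by simp [mul_comm]

theorem eq_univ_of_eq (hf : IsResolution C f)
    (hu : ∀ f' : ι → Fin n, IsResolution C f' → ∃ σ : Equiv.Perm (Fin n), f' = σ ∘ f)
    {j j' : ι} (hC : C j = C j') (hfj : f j ≠ f j') : C j = univ := by
  classical
  obtain ⟨σ, hσ⟩ := hu _ (hf.comp_perm (Equiv.swap j j') fun t => by
    rcases eq_or_ne t j with rfl | h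
    · simp [hC]
    rcases eq_or_ne t j' with rfl | h'
    · simp [hC]
    · rw [Equiv.swap_apply_of_ne_of_ne h h'])
  -- a component of class `f j` through a point outside `C j` is fixed by the swap, so `σ` fixes
  -- `f j`; yet `σ (f j) = f j'`
  refine eq_univ_of_forall fun x => by_contra fun hx => ?_
  obtain ⟨k, ⟨hk, hxk⟩, -⟩ := hf (f j) x
  have hkj : k ≠ j := by rintro rfl; exact hx hxk
  have hkj' : k ≠ j' := by rintro rfl; exact hfj hk.symm
  have hσk : σ (f k) = f k := by
    simpa [Equiv.swap_apply_of_ne_of_ne hkj hkj'] using (congrFun hσ k).symm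
  have hσj : σ (f j) = f j' := by simpa using (congrFun hσ j).symm
  exact hfj (by rw [← hσj, ← hk, hσk])

end IsResolution

theorem UniquelyResolvable.injOn {ι : Type*} {m n : ℕ} {C : ι → Finset (Fin m)}
    (hU : UniquelyResolvable n C) : Set.InjOn C {j | C j ≠ univ} := by
  obtain ⟨hne, f, hf, hu⟩ := hU
  intro j hj j' _ hC
  by_contra hjj'
  by_cases hfj : f j = f j'
  · obtain ⟨x, hx⟩ := hne j
    exact hjj' (hf.eq_of_mem hfj hx (hC ▸ hx))
  · exact hj (hf.eq_univ_of_eq hu hC hfj)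

theorem UniquelyResolvable.card_le {ι : Type*} [Fintype ι] {m n : ℕ} {C : ι → Finset (Fin m)}
    (hU : UniquelyResolvable n C) {K : ℕ} (hK : 2 ≤ K) :
    Fintype.card ι ≤ (K - 1) * n + #{A : Finset (Fin m) | K * #A ≤ m} := by
  classical
  obtain ⟨f, hf, -⟩ := hU.2
  have hsmall : #{j | K * #(C j) ≤ m} ≤ #{A : Finset (Fin m) | K * #A ≤ m} := by
    refine card_le_card_of_injOn C (fun j hj => by simpa using hj) (hU.injOn.mono fun j hj => ?_)
    have hj : K * #(C j) ≤ m := by simpa using hj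
    have hlt : #(C j) < m := by nlinarith [card_pos.mpr (hU.1 j)]
    exact fun h => hlt.ne (by simp [h])
  have hsplit := card_filter_add_card_filter_not (s := (univ : Finset ι)) fun j => K * #(C j) ≤ m
  simp only [not_le, card_univ] at hsplit
  have hlarge := hf.card_filter_lt_mul_card_le_mul K
  omega

open Real in
theorem card_filter_mul_card_le_exp (m : ℕ) {K : ℕ} (hK : 0 < K) :
    (#{A : Finset (Fin m) | K * #A ≤ m} : ℝ) ≤ exp (m / K * (1 + log K)) := by
  have hK' : (0 : ℝ) < K := by exact_mod_cast hK
  have hterm : ∀ A : Finset (Fin m), K * #A ≤ m →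
      (1 : ℝ) ≤ exp (m / K * log K) * (K : ℝ)⁻¹ ^ #A := by
    intro A hA
    have hA' : (#A : ℝ) ≤ m / K := by
      rw [le_div_iff₀ hK', mul_comm]; exact_mod_cast hA
    rw [inv_pow, ← div_eq_mul_inv, one_le_div (by positivity), ← exp_log hK', ← exp_nat_mul,
      exp_log hK']
    gcongr
  calc (#{A : Finset (Fin m) | K * #A ≤ m} : ℝ)
      = ∑ A : Finset (Fin m) with K * #A ≤ m, 1 := by simp
    _ ≤ ∑ A : Finset (Fin m), exp (m / K * log K) * (K : ℝ)⁻¹ ^ #A :=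
      (sum_le_sum fun A hA => hterm A (mem_filter.mp hA).2).trans
        (sum_le_sum_of_subset_of_nonneg (filter_subset _ _) fun _ _ _ => by positivity)
    _ = exp (m / K * log K) * (1 + (K : ℝ)⁻¹) ^ m := by
      rw [← mul_sum]; simpa [add_comm] using Fin.sum_pow_mul_eq_add_pow ((K : ℝ)⁻¹) 1
    _ ≤ exp (m / K * log K) * exp (K : ℝ)⁻¹ ^ m := by
      gcongr; linarith [add_one_le_exp (K : ℝ)⁻¹]
    _ = exp (m / K * (1 + log K)) := by
      rw [← exp_nat_mul, ← exp_add]; ring_nf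

open Real in
theorem one_add_log_le_mul_log_two {c : ℝ} (hc0 : 0 < c) (hc1 : c < 1) {K : ℝ}
    (hK1 : (6 - 3.2 * logb 2 c) / c - 1 ≤ K) (hK2 : K ≤ (6 - 3.2 * logb 2 c) / c) :
    1 + log K ≤ c * K * log 2 := by
  set b := -logb 2 c
  have hb : 0 < b := neg_pos.mpr (logb_neg one_lt_two hc0 hc1)
  have hL : 0.69 < log 2 := lt_trans (by norm_num) log_two_gt_d9
  have hlogc : log c = -b * log 2 := by simp [b, logb, div_mul_cancel₀ _ (log_pos one_lt_two).ne']
  have hR : (6 - 3.2 * logb 2 c) / c = (6 + 3.2 * b) / c := by simp [b, sub_eq_add_neg]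
  rw [hR] at hK1 hK2
  have hcK : 5 + 3.2 * b ≤ c * K := by
    have := mul_le_mul_of_nonneg_left hK1 hc0.le
    rw [mul_sub, mul_div_cancel₀ _ hc0.ne'] at this
    linarith
  have hK0 : 0 < K := by nlinarith
  have hlogK : log K ≤ log (6 + 3.2 * b) + b * log 2 := by
    have := log_le_log hK0 hK2
    rw [log_div (by positivity) hc0.ne', hlogc] at this
    linarith
  -- `log x ≤ x - 1` at `x = (6 + 3.2 b) / 4`
  have hlog : log (6 + 3.2 * b) ≤ 2 * log 2 + 1 / 2 + 0.8 * b := by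
    have := log_le_sub_one_of_pos (x := (6 + 3.2 * b) / 4) (by positivity)
    rw [log_div (by positivity) (by norm_num), show (4 : ℝ) = 2 ^ 2 by norm_num, log_pow] at this
    push_cast at this
    linarith
  nlinarith [mul_le_mul_of_nonneg_right hcK (log_pos one_lt_two).le]

open Real in
theorem stmt18_general (m n : ℕ) (c : ℝ) (hc0 : 0 < c) (hc1 : c < 1)
    (hnc : (n : ℝ) = 2 ^ (c * (m : ℝ))) :
    (g n m : ℝ) ≤ ((n : ℝ) / c) * (6 - 3.2 * Real.logb 2 c) := by
  set R := (6 - 3.2 * logb 2 c) / c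
  have hR : 6 ≤ R := by
    rw [le_div_iff₀ hc0]
    nlinarith [logb_neg one_lt_two hc0 hc1]
  set K := ⌊R⌋₊
  have hK : 6 ≤ K := Nat.le_floor (by exact_mod_cast hR)
  have hsmall : #{A : Finset (Fin m) | K * #A ≤ m} ≤ n := by
    have hlog := one_add_log_le_mul_log_two hc0 hc1 (Nat.sub_one_lt_floor R).le
      (Nat.floor_le (by linarith))
    have hK0 : (0 : ℝ) < K := by exact_mod_cast (by omega : 0 < K)
    have : (#{A : Finset (Fin m) | K * #A ≤ m} : ℝ) ≤ n := calc
      _ ≤ exp (m / K * (1 + log K)) := card_filter_mul_card_le_exp m (by omega)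
      _ ≤ exp (m / K * (c * K * log 2)) := by gcongr
      _ = n := by rw [hnc, rpow_def_of_pos two_pos]; field_simp
    exact_mod_cast this
  have hg : g n m ≤ K * n := csSup_le' fun N ⟨C, hC⟩ => by
    have := hC.card_le (by omega : 2 ≤ K)
    rw [Fintype.card_fin, Nat.sub_one_mul] at this
    have := Nat.le_mul_of_pos_left n (by omega : 0 < K)
    omega
  calc (g n m : ℝ) ≤ K * n := by exact_mod_cast hg
    _ ≤ R * n := by gcongr; exact Nat.floor_le (by linarith)
    _ = n / c * (6 - 3.2 * logb 2 c) := by ring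

/-- Upper bound: if `c ∈ (0,1)`, `n = 2 ^ (c m)` and `1 ≤ n ≤ 2 ^ (m-1) - 1`, then
`g n m ≤ (n/c) (6 - 3.2 log₂ c)`. -/
theorem stmt18 (m n : ℕ) (c : ℝ) (hc0 : 0 < c) (hc1 : c < 1)
    (hnc : (n : ℝ) = 2 ^ (c * (m : ℝ))) (hn1 : 1 ≤ n) (hn2 : n ≤ 2 ^ (m - 1) - 1) :
    (g n m : ℝ) ≤ ((n : ℝ) / c) * (6 - 3.2 * Real.logb 2 c) :=
  stmt18_general m n c hc0 hc1 hnc
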